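/- arXiv:1711.10562 — 3 statements merged into one kernel-verified Lean document; each statement's English description precedes it below -/
import Mathlib

section
/- Let p ≥ 1, let n be an integer with n ≥ 2p - 1, let 0 ≤ k ≤ p, and let a_1 ≥ a_2 ≥ ⋯ ≥ a_k ≥ 0 be integers. Define τ ∈ ℝ^p by τ_i = -n/2 for 1 ≤ i ≤ p-k and τ_i = -a_{p+1-i} - n/2 for p-k < i ≤ p, and define ρ ∈ ℝ^p by ρ_i = p + 1 - i. Then for every γ in the set {2e_i : 1 ≤ i ≤ p} ∪ {e_i + e_j : 1 ≤ i < j ≤ p}, the quantity (τ+ρ)_γ := 2⟨τ+ρ, γ⟩ / ⟨γ, γ⟩ is not a positive integer. (These γ are the positive noncompact roots of sp(2p,ℝ), and τ is the highest weight arising in the duality correspondence for the pair (O(n,ℝ), Sp(2p,ℝ)) from an O(n,ℝ)-highest weight (a_1, …, a_k, 0, …, 0; ε) with ε = 1.) -/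
/-- Case `ε = 1` of the duality correspondence for `(O(n,ℝ), Sp(2p,ℝ))`: for `n ≥ 2p - 1`,
`0 ≤ k ≤ p` and integers `a_1 ≥ ⋯ ≥ a_k ≥ 0`, the weight `τ` with `τ_i = -n/2` for
`1 ≤ i ≤ p-k` and `τ_i = -a_{p+1-i} - n/2` for `p-k < i ≤ p`, together with
`ρ_i = p + 1 - i`, satisfies: for every positive noncompact root `γ` of `sp(2p,ℝ)`
(`γ = 2e_i`, or `γ = e_i + e_j` with `i < j`), the quantity `2⟨τ+ρ, γ⟩/⟨γ,γ⟩` is not a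
positive integer.  Here `i : Fin p` denotes the `((i:ℕ)+1)`-st coordinate. -/
theorem stmt10 (p : ℕ) (hp : 1 ≤ p) (n : ℤ) (hn : 2 * (p : ℤ) - 1 ≤ n)
    (k : ℕ) (hk : k ≤ p) (a : ℕ → ℤ)
    (ha_anti : ∀ i j : ℕ, 1 ≤ i → i ≤ j → j ≤ k → a j ≤ a i)
    (ha_nonneg : ∀ i : ℕ, 1 ≤ i → i ≤ k → 0 ≤ a i) :
    let τ : Fin p → ℝ := fun i =>
      if (i : ℕ) + 1 ≤ p - k then -(n : ℝ) / 2
      else -(a (p - (i : ℕ)) : ℝ) - (n : ℝ) / 2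
    let ρ : Fin p → ℝ := fun i => (p : ℝ) + 1 - ((i : ℕ) + 1)
    ∀ γ : Fin p → ℝ,
      ((∃ i : Fin p, γ = (2 : ℝ) • (Pi.single i 1 : Fin p → ℝ)) ∨
        (∃ i j : Fin p, i < j ∧
          γ = (Pi.single i 1 : Fin p → ℝ) + (Pi.single j 1 : Fin p → ℝ))) →
      ∀ z : ℤ, 0 < z →
        (2 * ∑ x, (τ x + ρ x) * γ x) / (∑ x, γ x * γ x) ≠ (z : ℝ) := by
  intro τ ρ γ hγ z hz
  have hz1 : (1:ℝ) ≤ (z:ℝ) := by exact_mod_cast hz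
  have hn' : (p:ℝ) - 1/2 ≤ (n:ℝ)/2 := by
    have : ((2 * (p:ℤ) - 1 : ℤ) : ℝ) ≤ ((n:ℤ) : ℝ) := by exact_mod_cast hn
    push_cast at this; linarith
  have key : ∀ i : Fin p, τ i + ρ i ≤ 1/2 - (i : ℕ) := by
    intro i
    have hi : (i:ℕ) < p := i.isLt
    simp only [τ, ρ]
    split_ifs with h
    · push_cast; linarith
    · have h2 : p - (i:ℕ) ≤ k := by omega
      have h1 : 1 ≤ p - (i:ℕ) := by omega
      have h3 := ha_nonneg (p - (i:ℕ)) h1 h2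
      have h4 : (0:ℝ) ≤ (a (p - (i:ℕ)) : ℝ) := by exact_mod_cast h3
      push_cast
      linarith
  rcases hγ with ⟨i, rfl⟩ | ⟨i, j, hij, rfl⟩
  · have hs1 : ∑ x, (τ x + ρ x) * ((2:ℝ) • (Pi.single i 1 : Fin p → ℝ)) x
        = 2 * (τ i + ρ i) := by
      simp [Pi.single_apply, mul_ite, mul_comm]
    have hs2 : ∑ x, ((2:ℝ) • (Pi.single i 1 : Fin p → ℝ)) x *
        ((2:ℝ) • (Pi.single i 1 : Fin p → ℝ)) x = 4 := by
      simp [Pi.single_apply, mul_ite]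
      norm_num
    rw [hs1, hs2]
    have hkey := key i
    have : (2 * (2 * (τ i + ρ i))) / 4 < (z:ℝ) := by
      have : (0:ℝ) ≤ (i:ℕ) := Nat.cast_nonneg _
      nlinarith
    exact ne_of_lt this
  · have hne : i ≠ j := ne_of_lt hij
    have hs1 : ∑ x, (τ x + ρ x) *
        ((Pi.single i 1 : Fin p → ℝ) + (Pi.single j 1 : Fin p → ℝ)) x
        = (τ i + ρ i) + (τ j + ρ j) := by
      simp [Pi.single_apply, mul_add, mul_ite, Finset.sum_add_distrib]
    have hs2 : ∑ x, ((Pi.single i 1 : Fin p → ℝ) + (Pi.single j 1 : Fin p → ℝ)) x *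
        ((Pi.single i 1 : Fin p → ℝ) + (Pi.single j 1 : Fin p → ℝ)) x = 2 := by
      simp only [Pi.add_apply, add_mul, mul_add, Finset.sum_add_distrib,
        Pi.single_apply, mul_ite, mul_one, mul_zero, ite_mul, one_mul, zero_mul]
      simp [hne, Ne.symm hne]
      norm_num
    rw [hs1, hs2]
    have hki := key i
    have hkj := key j
    have hj1 : 1 ≤ (j:ℕ) := by
      have : (i:ℕ) < (j:ℕ) := hij
      omega
    have hjr : (1:ℝ) ≤ (j:ℕ) := by exact_mod_cast hj1
    have hir : (0:ℝ) ≤ (i:ℕ) := Nat.cast_nonneg _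
    have : (2 * ((τ i + ρ i) + (τ j + ρ j))) / 2 < (z:ℝ) := by nlinarith
    exact ne_of_lt this
end

section
/- Let p ≥ 1, let n be an integer with n ≥ 2p - 1, let 0 ≤ k ≤ n/2 and n - k ≤ p, and let a_1 ≥ a_2 ≥ ⋯ ≥ a_k ≥ 0 be integers. Define τ ∈ ℝ^p by τ_i = -n/2 for 1 ≤ i ≤ p+k-n, τ_i = -n/2 - 1 for p+k-n < i ≤ p-k, and τ_i = -a_{p+1-i} - n/2 for p-k < i ≤ p, and define ρ ∈ ℝ^p by ρ_i = p + 1 - i. Then for every γ in the set {2e_i : 1 ≤ i ≤ p} ∪ {e_i + e_j : 1 ≤ i < j ≤ p}, the quantity (τ+ρ)_γ := 2⟨τ+ρ, γ⟩ / ⟨γ, γ⟩ is not a positive integer. (These γ are the positive noncompact roots of sp(2p,ℝ), and τ is the highest weight arising in the duality correspondence for the pair (O(n,ℝ), Sp(2p,ℝ)) from an O(n,ℝ)-highest weight (a_1, …, a_k, 0, …, 0; ε) with ε = -1.) -/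
/-- Case `ε = -1` of the duality correspondence for `(O(n,ℝ), Sp(2p,ℝ))`: for `n ≥ 2p - 1`,
`0 ≤ k ≤ n/2`, `n - k ≤ p` and integers `a_1 ≥ ⋯ ≥ a_k ≥ 0`, the weight `τ` with
`τ_i = -n/2` for `1 ≤ i ≤ p+k-n`, `τ_i = -n/2 - 1` for `p+k-n < i ≤ p-k`, and
`τ_i = -a_{p+1-i} - n/2` for `p-k < i ≤ p`, together with `ρ_i = p + 1 - i`, satisfies:
for every positive noncompact root `γ` of `sp(2p,ℝ)` (`γ = 2e_i`, or `γ = e_i + e_j`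
with `i < j`), the quantity `2⟨τ+ρ, γ⟩/⟨γ,γ⟩` is not a positive integer.
Here `i : Fin p` denotes the `((i:ℕ)+1)`-st coordinate. -/
theorem stmt11 (p : ℕ) (hp : 1 ≤ p) (n : ℤ) (hn : 2 * (p : ℤ) - 1 ≤ n)
    (k : ℕ) (hk : 2 * (k : ℤ) ≤ n) (hkp : n - (k : ℤ) ≤ (p : ℤ)) (a : ℕ → ℤ)
    (ha_anti : ∀ i j : ℕ, 1 ≤ i → i ≤ j → j ≤ k → a j ≤ a i)
    (ha_nonneg : ∀ i : ℕ, 1 ≤ i → i ≤ k → 0 ≤ a i) :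
    let τ : Fin p → ℝ := fun i =>
      if ((i : ℕ) : ℤ) + 1 ≤ (p : ℤ) + (k : ℤ) - n then -(n : ℝ) / 2
      else if ((i : ℕ) : ℤ) + 1 ≤ (p : ℤ) - (k : ℤ) then -(n : ℝ) / 2 - 1
      else -(a (p - (i : ℕ)) : ℝ) - (n : ℝ) / 2
    let ρ : Fin p → ℝ := fun i => (p : ℝ) + 1 - ((i : ℕ) + 1)
    ∀ γ : Fin p → ℝ,
      ((∃ i : Fin p, γ = (2 : ℝ) • (Pi.single i 1 : Fin p → ℝ)) ∨
        (∃ i j : Fin p, i < j ∧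
          γ = (Pi.single i 1 : Fin p → ℝ) + (Pi.single j 1 : Fin p → ℝ))) →
      ∀ z : ℤ, 0 < z →
        (2 * ∑ x, (τ x + ρ x) * γ x) / (∑ x, γ x * γ x) ≠ (z : ℝ) := by
  intro τ ρ γ hγ z hz heq
  have hτρ : ∀ i : Fin p, ∃ c : ℤ, c ≤ 0 ∧
      τ i + ρ i = (((p : ℤ) - (i : ℕ) + c : ℤ) : ℝ) - (n : ℝ) / 2 := by
    intro i
    have hi : (i : ℕ) < p := i.isLt
    simp only [τ, ρ]
    split_ifs with h1 h2
    · exact ⟨0, le_refl 0, by push_cast; ring⟩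
    · exact ⟨-1, by norm_num, by push_cast; ring⟩
    · refine ⟨-(a (p - (i : ℕ))), ?_, by push_cast; ring⟩
      have hle : p - (i : ℕ) ≤ k := by omega
      have hge : 1 ≤ p - (i : ℕ) := by omega
      have := ha_nonneg _ hge hle
      linarith
  rcases hγ with ⟨i, rfl⟩ | ⟨i, j, hij, rfl⟩
  · have hnum : ∑ x, (τ x + ρ x) * ((2 : ℝ) • (Pi.single i 1 : Fin p → ℝ)) x
        = 2 * (τ i + ρ i) := by
      simp [Pi.single_apply, mul_ite, Finset.mul_sum, mul_comm]
    have hden : ∑ x, ((2 : ℝ) • (Pi.single i 1 : Fin p → ℝ)) x *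
        ((2 : ℝ) • (Pi.single i 1 : Fin p → ℝ)) x = 4 := by
      simp [Pi.single_apply, ite_and]
      norm_num
    rw [hnum, hden, div_eq_iff (by norm_num : (4:ℝ) ≠ 0)] at heq
    obtain ⟨c, hc, hval⟩ := hτρ i
    have h2 : τ i + ρ i = (z : ℝ) := by linarith
    rw [hval] at h2
    have hZ : 2 * ((p : ℤ) - (i : ℕ) + c) - n = 2 * z := by
      have : ((2 * ((p : ℤ) - (i : ℕ) + c) - n : ℤ) : ℝ) = ((2 * z : ℤ) : ℝ) := by
        push_cast at h2 ⊢; linarith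
      exact_mod_cast this
    omega
  · have hne : i ≠ j := ne_of_lt hij
    have hnum : ∑ x, (τ x + ρ x) *
        ((Pi.single i 1 : Fin p → ℝ) + (Pi.single j 1 : Fin p → ℝ)) x
        = (τ i + ρ i) + (τ j + ρ j) := by
      simp [Pi.single_apply, mul_add, Finset.sum_add_distrib]
    have hden : ∑ x, ((Pi.single i 1 : Fin p → ℝ) + (Pi.single j 1 : Fin p → ℝ)) x *
        ((Pi.single i 1 : Fin p → ℝ) + (Pi.single j 1 : Fin p → ℝ)) x = 2 := by
      simp [Pi.single_apply, add_mul, mul_add, ite_and, Finset.sum_add_distrib,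
        hne, hne.symm]
      norm_num
    rw [hnum, hden, div_eq_iff (by norm_num : (2:ℝ) ≠ 0)] at heq
    obtain ⟨ci, hci, hvi⟩ := hτρ i
    obtain ⟨cj, hcj, hvj⟩ := hτρ j
    have h2 : τ i + ρ i + (τ j + ρ j) = (z : ℝ) := by linarith
    rw [hvi, hvj] at h2
    have hZ : ((p : ℤ) - (i : ℕ) + ci) + ((p : ℤ) - (j : ℕ) + cj) - n = z := by
      have : ((((p : ℤ) - (i : ℕ) + ci) + ((p : ℤ) - (j : ℕ) + cj) - n : ℤ) : ℝ)
          = ((z : ℤ) : ℝ) := by push_cast at h2 ⊢; linarith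
      exact_mod_cast this
    have : (i : ℕ) < (j : ℕ) := hij
    omega
end

section
/- Fix p ≥ 1 and let g = sp(2p,ℂ) = {X ∈ M_{2p}(ℂ) : Xᵀ J + J X = 0}, where J = (0 I_p; -I_p 0). Define k' = {(X 0; 0 -Xᵀ) : X ∈ M_p(ℂ)}, p⁺ = {(0 Y; 0 0) : Y = Yᵀ}, p⁻ = {(0 0; Z 0) : Z = Zᵀ}, and the Lie subalgebras q⁺ = k' ⊕ p⁺ and q⁻ = k' ⊕ p⁻. Let E be a finite-dimensional q⁺-module on which p⁺ acts by zero and F a finite-dimensional q⁻-module on which p⁻ acts by zero; set V_E = U(g) ⊗_{U(q⁺)} E and V_F = U(g) ⊗_{U(q⁻)} F, and give V_E ⊗_ℂ V_F the diagonal g-action. For each N ≥ 0 let W_N be the ℂ-linear span in V_E ⊗ V_F of the elements ((α_1⋯α_r)·(1 ⊗ e')) ⊗ ((β_1⋯β_s)·(1 ⊗ f')) with r + s ≤ N, α_i ∈ p⁻, β_j ∈ p⁺, e' ∈ E, f' ∈ F. Then for all α_1, …, α_k ∈ p⁻, β_1, …, β_l ∈ p⁺, e ∈ E and f ∈ F,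 the diagonal action of the product α_1⋯α_k β_1⋯β_l ∈ U(g) satisfies (α_1⋯α_k β_1⋯β_l) · ((1 ⊗ e) ⊗ (1 ⊗ f)) = ((α_1⋯α_k)·(1 ⊗ e)) ⊗ ((β_1⋯β_l)·(1 ⊗ f)) + v for some v ∈ W_{k+l-1}. -/
/-!
Write `P = p⁺`, `M = p⁻`, `K = k'`. Since `p⁺` kills `1 ⊗ e`, the `β`'s act on the second factor
only. Each `α` then acts on `x ⊗ y` by the Leibniz rule: on `x` it lengthens the `p⁻`-word, while on
`y = (β₁ ⋯ βₛ)(1 ⊗ f)` it can be commuted to the right, producing brackets in `[p⁻, p⁺] ⊆ k'` and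
`[k', p⁺] ⊆ p⁺`, until it meets `1 ⊗ f`, which `p⁻` kills and `k'` maps into `1 ⊗ F`. So the second
term strictly lowers the `p⁺`-degree, and every correction has total degree `< k + l`.
-/

open Matrix TensorProduct

attribute [local instance 100] LieRing.ofAssociativeRing

/-- `2p × 2p` complex matrices in `p × p` block form. -/
abbrev gl2 (p : ℕ) := Matrix (Fin p ⊕ Fin p) (Fin p ⊕ Fin p) ℂ

section LieWords

variable (R : Type*) {L V W : Type*} [CommRing R] [LieRing L]
  [AddCommGroup V] [Module R V] [LieRingModule L V]
  [AddCommGroup W] [Module R W] [LieRingModule L W]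

/-- Words `(w₁ ⋯ wₘ) • s` with `m < n`: the strict bound lets the degree drop below zero without
truncated subtraction. -/
def lieWordSpan (P : Set L) (S : Set W) (n : ℕ) : Submodule R W :=
  Submodule.span R
    {u | ∃ ws : List L, ws.length < n ∧ (∀ w ∈ ws, w ∈ P) ∧ ∃ s ∈ S, u = ws.foldr (⁅·, ·⁆) s}

def tmulLieWordSpan (M : Set L) (T : Set V) (P : Set L) (S : Set W) (n : ℕ) :
    Submodule R (V ⊗[R] W) :=
  Submodule.span R
    {u | ∃ la lb : List L, la.length + lb.length < n ∧ (∀ w ∈ la, w ∈ M) ∧ (∀ w ∈ lb, w ∈ P) ∧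
      ∃ t ∈ T, ∃ s ∈ S, u = la.foldr (⁅·, ·⁆) t ⊗ₜ[R] lb.foldr (⁅·, ·⁆) s}

variable {R} {M K P : Set L} {T : Set V} {S : Set W}

lemma lieWordSpan_mono {m n : ℕ} (h : m ≤ n) : lieWordSpan R P S m ≤ lieWordSpan R P S n :=
  Submodule.span_mono fun _ ⟨ws, hlen, hws, s, hs, hu⟩ => ⟨ws, hlen.trans_le h, hws, s, hs, hu⟩

lemma foldr_lie_mem_lieWordSpan {ws : List L} (hws : ∀ w ∈ ws, w ∈ P) {s : W} (hs : s ∈ S) :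
    ws.foldr (⁅·, ·⁆) s ∈ lieWordSpan R P S (ws.length + 1) :=
  Submodule.subset_span ⟨ws, ws.length.lt_succ_self, hws, s, hs, rfl⟩

lemma foldr_lie_tmul_mem_tmulLieWordSpan {la : List L} (hla : ∀ w ∈ la, w ∈ M) {t : V}
    (ht : t ∈ T) {m n : ℕ} (hmn : la.length + m ≤ n) {y : W} (hy : y ∈ lieWordSpan R P S m) :
    la.foldr (⁅·, ·⁆) t ⊗ₜ[R] y ∈ tmulLieWordSpan R M T P S n := by
  suffices lieWordSpan R P S m ≤
      (tmulLieWordSpan R M T P S n).comap (TensorProduct.mk R V W (la.foldr (⁅·, ·⁆) t)) from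
    this hy
  refine Submodule.span_le.2 ?_
  rintro _ ⟨lb, hlen, hlb, s, hs, rfl⟩
  exact Submodule.subset_span ⟨la, lb, by omega, hla, hlb, t, ht, s, hs, rfl⟩

variable [LieAlgebra R L] [LieModule R L V] [LieModule R L W]

lemma foldr_lie_tmul_of_lie_eq_zero {lb : List L} {t : V} (hlb : ∀ w ∈ lb, ⁅w, t⁆ = 0) (y : W) :
    lb.foldr (⁅·, ·⁆) (t ⊗ₜ[R] y) = t ⊗ₜ[R] lb.foldr (⁅·, ·⁆) y := by
  induction lb with
  | nil => rfl
  | cons b lb ih =>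
    simp only [List.mem_cons, forall_eq_or_imp] at hlb
    rw [List.foldr_cons, List.foldr_cons, ih hlb.2, TensorProduct.LieModule.lie_tmul_right, hlb.1,
      TensorProduct.zero_tmul, zero_add]

lemma lie_mem_lieWordSpan_succ {b : L} (hb : b ∈ P) {n : ℕ} {x : W}
    (hx : x ∈ lieWordSpan R P S n) : ⁅b, x⁆ ∈ lieWordSpan R P S (n + 1) := by
  suffices lieWordSpan R P S n ≤ (lieWordSpan R P S (n + 1)).comap (LieModule.toEnd R L W b) from
    this hx
  refine Submodule.span_le.2 ?_
  rintro _ ⟨ws, hlen, hws, s, hs, rfl⟩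
  refine lieWordSpan_mono (by simpa using hlen) (foldr_lie_mem_lieWordSpan (ws := b :: ws) ?_ hs)
  simpa [hb] using hws

lemma lie_foldr_mem_lieWordSpan_of_normalizes (hKP : ∀ c ∈ K, ∀ b ∈ P, ⁅c, b⁆ ∈ P)
    (hKS : ∀ c ∈ K, ∀ s ∈ S, ⁅c, s⁆ ∈ S) {c : L} (hc : c ∈ K) {ws : List L}
    (hws : ∀ w ∈ ws, w ∈ P) {s : W} (hs : s ∈ S) :
    ⁅c, ws.foldr (⁅·, ·⁆) s⁆ ∈ lieWordSpan R P S (ws.length + 1) := by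
  induction ws with
  | nil => exact foldr_lie_mem_lieWordSpan (ws := []) (by simp) (hKS c hc s hs)
  | cons b ws ih =>
    simp only [List.mem_cons, forall_eq_or_imp] at hws
    rw [List.foldr_cons, leibniz_lie]
    refine add_mem ?_ (lie_mem_lieWordSpan_succ hws.1 (ih hws.2))
    refine foldr_lie_mem_lieWordSpan (ws := ⁅c, b⁆ :: ws) ?_ hs
    simpa [hKP c hc b hws.1] using hws.2

lemma lie_foldr_mem_lieWordSpan_length (hMP : ∀ a ∈ M, ∀ b ∈ P, ⁅a, b⁆ ∈ K)
    (hKP : ∀ c ∈ K, ∀ b ∈ P, ⁅c, b⁆ ∈ P) (hMS : ∀ a ∈ M, ∀ s ∈ S, ⁅a, s⁆ = 0)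
    (hKS : ∀ c ∈ K, ∀ s ∈ S, ⁅c, s⁆ ∈ S) {a : L} (ha : a ∈ M) {ws : List L}
    (hws : ∀ w ∈ ws, w ∈ P) {s : W} (hs : s ∈ S) :
    ⁅a, ws.foldr (⁅·, ·⁆) s⁆ ∈ lieWordSpan R P S ws.length := by
  induction ws with
  | nil => simp [hMS a ha s hs]
  | cons b ws ih =>
    simp only [List.mem_cons, forall_eq_or_imp] at hws
    rw [List.foldr_cons, leibniz_lie]
    exact add_mem (lie_foldr_mem_lieWordSpan_of_normalizes hKP hKS (hMP a ha b hws.1) hws.2 hs)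
      (lie_mem_lieWordSpan_succ hws.1 (ih hws.2))

lemma lie_mem_tmulLieWordSpan_succ (hMP : ∀ a ∈ M, ∀ b ∈ P, ⁅a, b⁆ ∈ K)
    (hKP : ∀ c ∈ K, ∀ b ∈ P, ⁅c, b⁆ ∈ P) (hMS : ∀ a ∈ M, ∀ s ∈ S, ⁅a, s⁆ = 0)
    (hKS : ∀ c ∈ K, ∀ s ∈ S, ⁅c, s⁆ ∈ S) {a : L} (ha : a ∈ M) {n : ℕ} {u : V ⊗[R] W}
    (hu : u ∈ tmulLieWordSpan R M T P S n) : ⁅a, u⁆ ∈ tmulLieWordSpan R M T P S (n + 1) := by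
  suffices tmulLieWordSpan R M T P S n ≤
      (tmulLieWordSpan R M T P S (n + 1)).comap (LieModule.toEnd R L (V ⊗[R] W) a) from
    this hu
  refine Submodule.span_le.2 ?_
  rintro _ ⟨la, lb, hlen, hla, hlb, t, ht, s, hs, rfl⟩
  rw [SetLike.mem_coe, Submodule.mem_comap, LieModule.toEnd_apply_apply,
    TensorProduct.LieModule.lie_tmul_right]
  have hala : ∀ w ∈ a :: la, w ∈ M := by simpa [ha] using hla
  refine add_mem (Submodule.subset_span ⟨a :: la, lb, ?_, hala, hlb, t, ht, s, hs, rfl⟩)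
    (foldr_lie_tmul_mem_tmulLieWordSpan hla ht (by omega)
      (lie_foldr_mem_lieWordSpan_length hMP hKP hMS hKS ha hlb hs))
  simp only [List.length_cons]
  omega

lemma foldr_lie_tmul_sub_mem_tmulLieWordSpan (hMP : ∀ a ∈ M, ∀ b ∈ P, ⁅a, b⁆ ∈ K)
    (hKP : ∀ c ∈ K, ∀ b ∈ P, ⁅c, b⁆ ∈ P) (hMS : ∀ a ∈ M, ∀ s ∈ S, ⁅a, s⁆ = 0)
    (hKS : ∀ c ∈ K, ∀ s ∈ S, ⁅c, s⁆ ∈ S) {la lb : List L} (hla : ∀ w ∈ la, w ∈ M)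
    (hlb : ∀ w ∈ lb, w ∈ P) {t : V} (ht : t ∈ T) {s : W} (hs : s ∈ S) :
    la.foldr (⁅·, ·⁆) (t ⊗ₜ[R] lb.foldr (⁅·, ·⁆) s) -
        la.foldr (⁅·, ·⁆) t ⊗ₜ[R] lb.foldr (⁅·, ·⁆) s ∈
      tmulLieWordSpan R M T P S (la.length + lb.length) := by
  induction la with
  | nil => simp
  | cons a la ih =>
    simp only [List.mem_cons, forall_eq_or_imp] at hla
    set y := lb.foldr (⁅·, ·⁆) s
    set x := la.foldr (⁅·, ·⁆) t
    have hsplit : ⁅a, la.foldr (⁅·, ·⁆) (t ⊗ₜ[R] y)⁆ - ⁅a, x⁆ ⊗ₜ[R] y =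
        x ⊗ₜ[R] ⁅a, y⁆ + ⁅a, la.foldr (⁅·, ·⁆) (t ⊗ₜ[R] y) - x ⊗ₜ[R] y⁆ := by
      rw [lie_sub, TensorProduct.LieModule.lie_tmul_right]
      abel
    rw [List.foldr_cons, List.foldr_cons, hsplit, List.length_cons, add_right_comm]
    exact add_mem (foldr_lie_tmul_mem_tmulLieWordSpan hla.2 ht (by omega)
        (lie_foldr_mem_lieWordSpan_length hMP hKP hMS hKS hla.1 hlb hs))
      (lie_mem_tmulLieWordSpan_succ hMP hKP hMS hKS hla.1 (ih hla.2))

theorem foldr_append_lie_tmul_sub_mem_tmulLieWordSpan (hMP : ∀ a ∈ M, ∀ b ∈ P, ⁅a, b⁆ ∈ K)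
    (hKP : ∀ c ∈ K, ∀ b ∈ P, ⁅c, b⁆ ∈ P) (hPT : ∀ b ∈ P, ∀ t ∈ T, ⁅b, t⁆ = 0)
    (hMS : ∀ a ∈ M, ∀ s ∈ S, ⁅a, s⁆ = 0) (hKS : ∀ c ∈ K, ∀ s ∈ S, ⁅c, s⁆ ∈ S) {la lb : List L}
    (hla : ∀ w ∈ la, w ∈ M) (hlb : ∀ w ∈ lb, w ∈ P) {t : V} (ht : t ∈ T) {s : W} (hs : s ∈ S) :
    (la ++ lb).foldr (⁅·, ·⁆) (t ⊗ₜ[R] s) -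
        la.foldr (⁅·, ·⁆) t ⊗ₜ[R] lb.foldr (⁅·, ·⁆) s ∈
      tmulLieWordSpan R M T P S (la.length + lb.length) := by
  rw [List.foldr_append, foldr_lie_tmul_of_lie_eq_zero fun b hb => hPT b (hlb b hb) t ht]
  exact foldr_lie_tmul_sub_mem_tmulLieWordSpan hMP hKP hMS hKS hla hlb ht hs

end LieWords

section SymplecticBlocks

variable {n R : Type*} [Fintype n] [DecidableEq n] [CommRing R]

def pPlus : Set (Matrix (n ⊕ n) (n ⊕ n) R) :=
  {A | ∃ Y : Matrix n n R, Yᵀ = Y ∧ A = fromBlocks 0 Y 0 0}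

def pMinus : Set (Matrix (n ⊕ n) (n ⊕ n) R) :=
  {A | ∃ Z : Matrix n n R, Zᵀ = Z ∧ A = fromBlocks 0 0 Z 0}

def kPrime : Set (Matrix (n ⊕ n) (n ⊕ n) R) :=
  {A | ∃ X : Matrix n n R, A = fromBlocks X 0 0 (-Xᵀ)}

lemma lie_mem_kPrime {A B : Matrix (n ⊕ n) (n ⊕ n) R} (hA : A ∈ pMinus) (hB : B ∈ pPlus) :
    ⁅A, B⁆ ∈ kPrime := by
  obtain ⟨Z, hZ, rfl⟩ := hA
  obtain ⟨Y, hY, rfl⟩ := hB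
  refine ⟨-(Y * Z), ?_⟩
  simp [Ring.lie_def, fromBlocks_multiply, sub_eq_add_neg, fromBlocks_neg, fromBlocks_add,
    transpose_mul, hY, hZ]

lemma lie_mem_pPlus {A B : Matrix (n ⊕ n) (n ⊕ n) R} (hA : A ∈ kPrime) (hB : B ∈ pPlus) :
    ⁅A, B⁆ ∈ pPlus := by
  obtain ⟨X, rfl⟩ := hA
  obtain ⟨Y, hY, rfl⟩ := hB
  refine ⟨X * Y + Y * Xᵀ, by simp [transpose_mul, hY, add_comm], ?_⟩
  simp [Ring.lie_def, fromBlocks_multiply, sub_eq_add_neg, fromBlocks_neg, fromBlocks_add]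

end SymplecticBlocks

theorem stmt15_general (p : ℕ)
    (g qPlus qMinus : LieSubalgebra ℂ (gl2 p))
    (hqPlus : ∀ M : gl2 p, M ∈ qPlus ↔
      ∃ X Y : Matrix (Fin p) (Fin p) ℂ, Yᵀ = Y ∧ M = fromBlocks X Y 0 (-Xᵀ))
    (hqMinus : ∀ M : gl2 p, M ∈ qMinus ↔
      ∃ X Z : Matrix (Fin p) (Fin p) ℂ, Zᵀ = Z ∧ M = fromBlocks X 0 Z (-Xᵀ))
    (E : Type) [AddCommGroup E] [Module ℂ E] [LieRingModule qPlus E]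
    (hE : ∀ x : qPlus,
      (∃ Y : Matrix (Fin p) (Fin p) ℂ, Yᵀ = Y ∧ (x : gl2 p) = fromBlocks 0 Y 0 0) →
      ∀ e : E, ⁅x, e⁆ = 0)
    (F : Type) [AddCommGroup F] [Module ℂ F] [LieRingModule qMinus F]
    (hF : ∀ x : qMinus,
      (∃ Z : Matrix (Fin p) (Fin p) ℂ, Zᵀ = Z ∧ (x : gl2 p) = fromBlocks 0 0 Z 0) →
      ∀ f : F, ⁅x, f⁆ = 0)
    (VE : Type) [AddCommGroup VE] [Module ℂ VE] [LieRingModule g VE] [LieModule ℂ g VE]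
    (ιE : E →ₗ[ℂ] VE)
    (hιE : ∀ (x : qPlus) (hx : (x : gl2 p) ∈ g) (e : E),
      ιE ⁅x, e⁆ = ⁅(⟨(x : gl2 p), hx⟩ : g), ιE e⁆)
    (VF : Type) [AddCommGroup VF] [Module ℂ VF] [LieRingModule g VF] [LieModule ℂ g VF]
    (ιF : F →ₗ[ℂ] VF)
    (hιF : ∀ (x : qMinus) (hx : (x : gl2 p) ∈ g) (f : F),
      ιF ⁅x, f⁆ = ⁅(⟨(x : gl2 p), hx⟩ : g), ιF f⁆)
    -- the filtration `W_N` of `VE ⊗ VF`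
    (Wfil : ℕ → Submodule ℂ (VE ⊗[ℂ] VF))
    (hWfil : ∀ N : ℕ, Wfil N = Submodule.span ℂ
      {u : VE ⊗[ℂ] VF | ∃ la lb : List g,
        la.length + lb.length ≤ N ∧
        (∀ w ∈ la, ∃ Z : Matrix (Fin p) (Fin p) ℂ, Zᵀ = Z ∧
          ((w : gl2 p) = fromBlocks 0 0 Z 0)) ∧
        (∀ w ∈ lb, ∃ Y : Matrix (Fin p) (Fin p) ℂ, Yᵀ = Y ∧
          ((w : gl2 p) = fromBlocks 0 Y 0 0)) ∧
        ∃ (e' : E) (f' : F),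
          u = (la.foldr (fun w v => ⁅w, v⁆) (ιE e')) ⊗ₜ[ℂ]
              (lb.foldr (fun w v => ⁅w, v⁆) (ιF f'))})
    (k l : ℕ) (α : Fin k → g) (β : Fin l → g)
    -- `α_i ∈ p⁻`, `β_j ∈ p⁺`
    (hα : ∀ i, ∃ Z : Matrix (Fin p) (Fin p) ℂ, Zᵀ = Z ∧
      ((α i : gl2 p) = fromBlocks 0 0 Z 0))
    (hβ : ∀ j, ∃ Y : Matrix (Fin p) (Fin p) ℂ, Yᵀ = Y ∧
      ((β j : gl2 p) = fromBlocks 0 Y 0 0))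
    (e : E) (f : F) :
    ∃ v ∈ Wfil (k + l - 1),
      (List.ofFn α ++ List.ofFn β).foldr (fun w u => ⁅w, u⁆) ((ιE e) ⊗ₜ[ℂ] (ιF f))
        = ((List.ofFn α).foldr (fun w v => ⁅w, v⁆) (ιE e)) ⊗ₜ[ℂ]
            ((List.ofFn β).foldr (fun w v => ⁅w, v⁆) (ιF f)) + v := by
  have hPq : ∀ w : g, (w : gl2 p) ∈ pPlus → (w : gl2 p) ∈ qPlus := fun _ ⟨Y, hY, hw⟩ =>
    (hqPlus _).2 ⟨0, Y, hY, by simp [hw]⟩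
  have hMq : ∀ w : g, (w : gl2 p) ∈ pMinus → (w : gl2 p) ∈ qMinus := fun _ ⟨Z, hZ, hw⟩ =>
    (hqMinus _).2 ⟨0, Z, hZ, by simp [hw]⟩
  have hKq : ∀ w : g, (w : gl2 p) ∈ kPrime → (w : gl2 p) ∈ qMinus := fun _ ⟨X, hw⟩ =>
    (hqMinus _).2 ⟨X, 0, transpose_zero, by simp [hw]⟩
  have key := foldr_append_lie_tmul_sub_mem_tmulLieWordSpan (R := ℂ) (T := Set.range ιE)
    (S := Set.range ιF) (L := g) (M := {w | (w : gl2 p) ∈ pMinus})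
    (K := {w | (w : gl2 p) ∈ kPrime}) (P := {w | (w : gl2 p) ∈ pPlus})
    (fun a ha b hb => by simpa using lie_mem_kPrime ha hb)
    (fun c hc b hb => by simpa using lie_mem_pPlus hc hb)
    (by rintro b hb _ ⟨e, rfl⟩; rw [← hιE ⟨b, hPq b hb⟩ b.2, hE ⟨b, hPq b hb⟩ hb, map_zero])
    (by rintro a ha _ ⟨f, rfl⟩; rw [← hιF ⟨a, hMq a ha⟩ a.2, hF ⟨a, hMq a ha⟩ ha, map_zero])
    (by rintro c hc _ ⟨f, rfl⟩; exact ⟨_, hιF ⟨c, hKq c hc⟩ c.2 f⟩)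
    (la := List.ofFn α) (fun _ hw => by obtain ⟨i, rfl⟩ := List.mem_ofFn.1 hw; exact hα i)
    (lb := List.ofFn β) (fun _ hw => by obtain ⟨j, rfl⟩ := List.mem_ofFn.1 hw; exact hβ j)
    (Set.mem_range_self e) (Set.mem_range_self f)
  rw [List.length_ofFn, List.length_ofFn] at key
  refine ⟨_, ?_, (add_sub_cancel _ _).symm⟩
  rw [hWfil]
  refine Submodule.span_mono ?_ key
  rintro _ ⟨la, lb, hlen, hla, hlb, _, ⟨e', rfl⟩, _, ⟨f', rfl⟩, rfl⟩
  exact ⟨la, lb, by omega, hla, hlb, e', f', rfl⟩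

/-- **Filtration lemma for the tensor product of two induced modules.**
Let `g = sp(2p,ℂ)`, `q⁺ = k' ⊕ p⁺` and `q⁻ = k' ⊕ p⁻`.  Let `E` be a finite-dimensional
`q⁺`-module on which `p⁺` acts by zero and `F` a finite-dimensional `q⁻`-module on which
`p⁻` acts by zero, and let `VE = U(g) ⊗_{U(q⁺)} E`, `VF = U(g) ⊗_{U(q⁻)} F` (characterized
by their universal properties, with unit maps `ιE`, `ιF`).  Give `VE ⊗ VF` the diagonal
`g`-action and let `W_N` be the span of the `((α_1⋯α_r)·(1 ⊗ e')) ⊗ ((β_1⋯β_s)·(1 ⊗ f'))`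
with `r + s ≤ N`, `α_i ∈ p⁻`, `β_j ∈ p⁺`.  Then for `α_1, …, α_k ∈ p⁻`, `β_1, …, β_l ∈ p⁺`,
`e ∈ E`, `f ∈ F`, the diagonal action of the product `α_1⋯α_k β_1⋯β_l ∈ U(g)` satisfies
`(α_1⋯α_kβ_1⋯β_l)·((1 ⊗ e) ⊗ (1 ⊗ f)) = ((α_1⋯α_k)·(1 ⊗ e)) ⊗ ((β_1⋯β_l)·(1 ⊗ f)) + v`
with `v ∈ W_{k+l-1}`. -/
theorem stmt15 (p : ℕ) (hp : 1 ≤ p)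
    (g qPlus qMinus : LieSubalgebra ℂ (gl2 p))
    (hg : ∀ M : gl2 p, M ∈ g ↔
      Mᵀ * fromBlocks 0 1 (-1) 0 + fromBlocks 0 1 (-1) 0 * M = 0)
    (hqPlus : ∀ M : gl2 p, M ∈ qPlus ↔
      ∃ X Y : Matrix (Fin p) (Fin p) ℂ, Yᵀ = Y ∧ M = fromBlocks X Y 0 (-Xᵀ))
    (hqMinus : ∀ M : gl2 p, M ∈ qMinus ↔
      ∃ X Z : Matrix (Fin p) (Fin p) ℂ, Zᵀ = Z ∧ M = fromBlocks X 0 Z (-Xᵀ))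
    (E : Type) [AddCommGroup E] [Module ℂ E] [LieRingModule qPlus E] [LieModule ℂ qPlus E]
    [FiniteDimensional ℂ E]
    (hE : ∀ x : qPlus,
      (∃ Y : Matrix (Fin p) (Fin p) ℂ, Yᵀ = Y ∧ (x : gl2 p) = fromBlocks 0 Y 0 0) →
      ∀ e : E, ⁅x, e⁆ = 0)
    (F : Type) [AddCommGroup F] [Module ℂ F] [LieRingModule qMinus F] [LieModule ℂ qMinus F]
    [FiniteDimensional ℂ F]
    (hF : ∀ x : qMinus,
      (∃ Z : Matrix (Fin p) (Fin p) ℂ, Zᵀ = Z ∧ (x : gl2 p) = fromBlocks 0 0 Z 0) →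
      ∀ f : F, ⁅x, f⁆ = 0)
    (VE : Type) [AddCommGroup VE] [Module ℂ VE] [LieRingModule g VE] [LieModule ℂ g VE]
    (ιE : E →ₗ[ℂ] VE)
    (hιE : ∀ (x : qPlus) (hx : (x : gl2 p) ∈ g) (e : E),
      ιE ⁅x, e⁆ = ⁅(⟨(x : gl2 p), hx⟩ : g), ιE e⁆)
    (hVEuniv : ∀ (M : Type) [AddCommGroup M] [Module ℂ M] [LieRingModule g M]
      [LieModule ℂ g M] (φ : E →ₗ[ℂ] M),
      (∀ (x : qPlus) (hx : (x : gl2 p) ∈ g) (e : E),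
        φ ⁅x, e⁆ = ⁅(⟨(x : gl2 p), hx⟩ : g), φ e⁆) →
      ∃! Φ : VE →ₗ[ℂ] M,
        (∀ (x : g) (v : VE), Φ ⁅x, v⁆ = ⁅x, Φ v⁆) ∧ ∀ e : E, Φ (ιE e) = φ e)
    (VF : Type) [AddCommGroup VF] [Module ℂ VF] [LieRingModule g VF] [LieModule ℂ g VF]
    (ιF : F →ₗ[ℂ] VF)
    (hιF : ∀ (x : qMinus) (hx : (x : gl2 p) ∈ g) (f : F),
      ιF ⁅x, f⁆ = ⁅(⟨(x : gl2 p), hx⟩ : g), ιF f⁆)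
    (hVFuniv : ∀ (M : Type) [AddCommGroup M] [Module ℂ M] [LieRingModule g M]
      [LieModule ℂ g M] (φ : F →ₗ[ℂ] M),
      (∀ (x : qMinus) (hx : (x : gl2 p) ∈ g) (f : F),
        φ ⁅x, f⁆ = ⁅(⟨(x : gl2 p), hx⟩ : g), φ f⁆) →
      ∃! Φ : VF →ₗ[ℂ] M,
        (∀ (x : g) (v : VF), Φ ⁅x, v⁆ = ⁅x, Φ v⁆) ∧ ∀ f : F, Φ (ιF f) = φ f)
    -- the filtration `W_N` of `VE ⊗ VF`
    (Wfil : ℕ → Submodule ℂ (VE ⊗[ℂ] VF))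
    (hWfil : ∀ N : ℕ, Wfil N = Submodule.span ℂ
      {u : VE ⊗[ℂ] VF | ∃ la lb : List g,
        la.length + lb.length ≤ N ∧
        (∀ w ∈ la, ∃ Z : Matrix (Fin p) (Fin p) ℂ, Zᵀ = Z ∧
          ((w : gl2 p) = fromBlocks 0 0 Z 0)) ∧
        (∀ w ∈ lb, ∃ Y : Matrix (Fin p) (Fin p) ℂ, Yᵀ = Y ∧
          ((w : gl2 p) = fromBlocks 0 Y 0 0)) ∧
        ∃ (e' : E) (f' : F),
          u = (la.foldr (fun w v => ⁅w, v⁆) (ιE e')) ⊗ₜ[ℂ]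
              (lb.foldr (fun w v => ⁅w, v⁆) (ιF f'))})
    (k l : ℕ) (α : Fin k → g) (β : Fin l → g)
    -- `α_i ∈ p⁻`, `β_j ∈ p⁺`
    (hα : ∀ i, ∃ Z : Matrix (Fin p) (Fin p) ℂ, Zᵀ = Z ∧
      ((α i : gl2 p) = fromBlocks 0 0 Z 0))
    (hβ : ∀ j, ∃ Y : Matrix (Fin p) (Fin p) ℂ, Yᵀ = Y ∧
      ((β j : gl2 p) = fromBlocks 0 Y 0 0))
    (e : E) (f : F) :
    ∃ v ∈ Wfil (k + l - 1),
      (List.ofFn α ++ List.ofFn β).foldr (fun w u => ⁅w, u⁆) ((ιE e) ⊗ₜ[ℂ] (ιF f))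
        = ((List.ofFn α).foldr (fun w v => ⁅w, v⁆) (ιE e)) ⊗ₜ[ℂ]
            ((List.ofFn β).foldr (fun w v => ⁅w, v⁆) (ιF f)) + v :=
  stmt15_general p g qPlus qMinus hqPlus hqMinus E hE F hF VE ιE hιE VF ιF hιF Wfil hWfil k l α β hα
    hβ e f
end
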